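/- Let f be a continuous function on [0,1] and n a natural number. If p₁ and p₂ are both best mean approximations to f among polynomials of degree at most n (with respect to the L¹-norm ‖g‖₁ = ∫₀¹|g| dx), then p₁ = p₂. -/

import Mathlib

/-!
If `p₁ ≠ p₂` are best approximations, then so is their midpoint `m`, and integrating the pointwise
inequality `2 |f - m| ≤ |f - p₁| + |f - p₂|` forces equality everywhere on `[0, 1]`. Hence `f - m`
can only vanish where `p₁ = p₂`, that is at most at `n` points. Since `f - m` is then nonzero almost
everywhere, perturbing `m` in a direction `q ∈ 𝒫ₙ` gives the first-order condition
`∫ sign (f - m) q ≤ 0`. But a polynomial `q` with one linear factor per sign change of `f - m` has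
degree at most `n` and the sign of `f - m`, so that `∫ sign (f - m) q = ∫ |q| > 0`.
-/

open Set MeasureTheory Filter Topology Polynomial

theorem Real.abs_sub_eq_of_abs_lt {a b : ℝ} (h : |b| < |a|) : |a - b| = |a| - Real.sign a * b := by
  rcases lt_trichotomy a 0 with ha | rfl | ha
  · rw [Real.sign_of_neg ha, abs_of_neg ha] at *
    rw [abs_of_neg (by linarith [neg_abs_le b])]
    ring
  · exact absurd h (by simp)
  · rw [Real.sign_of_pos ha, abs_of_pos ha] at *
    rw [abs_of_pos (by linarith [le_abs_self b])]
    ring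

theorem Real.sign_mul_eq_abs_of_mul_pos {a b : ℝ} (h : 0 < a * b) : Real.sign a * b = |b| := by
  rcases mul_pos_iff.1 h with ⟨ha, hb⟩ | ⟨ha, hb⟩
  · rw [Real.sign_of_pos ha, abs_of_pos hb, one_mul]
  · rw [Real.sign_of_neg ha, abs_of_neg hb, neg_one_mul]

theorem IsPreconnected.forall_pos_or_forall_neg {s : Set ℝ} {h : ℝ → ℝ} (hs : IsPreconnected s)
    (hc : ContinuousOn h s) (h0 : ∀ x ∈ s, h x ≠ 0) :
    (∀ x ∈ s, 0 < h x) ∨ ∀ x ∈ s, h x < 0 := by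
  by_contra! ⟨⟨x, hx, hxle⟩, y, hy, hyle⟩
  obtain ⟨z, hz, hz0⟩ := hs.intermediate_value hx hy hc ⟨hxle, hyle⟩
  exact h0 z hz hz0

theorem exists_polynomial_same_sign {g : ℝ → ℝ} {a b : ℝ} (T : Finset ℝ)
    (hc : ContinuousOn g (Ioo a b)) (hg : ∀ x ∈ Ioo a b, x ∉ T → g x ≠ 0) :
    ∃ q : ℝ[X], q.natDegree ≤ T.card ∧ (∀ x, x ∉ T → q.eval x ≠ 0) ∧
      ∀ x ∈ Ioo a b, x ∉ T → 0 < g x * q.eval x := by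
  classical
  induction T using Finset.induction_on_max generalizing b with
  | empty =>
    rcases isPreconnected_Ioo.forall_pos_or_forall_neg hc (fun x hx => hg x hx (by simp))
      with hpos | hneg
    · exact ⟨C 1, by simp, by simp, fun x hx _ => by simpa using hpos x hx⟩
    · exact ⟨C (-1), by simp, by simp, fun x hx _ => by simpa using hneg x hx⟩
  | insert z s hsz ih =>
    have hzs : z ∉ s := fun h => (hsz z h).false
    have hcard : (insert z s).card = s.card + 1 := Finset.card_insert_of_notMem hzs
    by_cases hz : z ∈ Ioo a b
    swap
    · have hmem : ∀ x ∈ Ioo a b, x ∉ s → x ∉ insert z s := fun x hx hxs hxz =>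
        (Finset.mem_insert.1 hxz).elim (fun h => hz (h ▸ hx)) hxs
      obtain ⟨q, hqdeg, hqroot, hq⟩ := ih hc fun x hx hxs => hg x hx (hmem x hx hxs)
      refine ⟨q, hqdeg.trans (by omega), fun x hx => hqroot x (by simp_all), ?_⟩
      exact fun x hx hxT => hq x hx (by simp_all)
    obtain ⟨q, hqdeg, hqroot, hq⟩ := ih (b := z) (hc.mono (Ioo_subset_Ioo_right hz.2.le))
      fun x hx hxs => hg x ⟨hx.1, hx.2.trans hz.2⟩ (by simp [hxs, hx.2.ne])
    -- The roots of `q` lie in `s`, left of `z`, so `g * q` has constant sign on `(z, b)`; if that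
    -- sign is wrong, the factor `z - X` flips it there without changing it on `(a, z)`.
    have hright : ∀ x ∈ Ioo z b, x ∉ insert z s := fun x hx hxT => by
      rcases Finset.mem_insert.1 hxT with h | h
      · exact hx.1.ne' h
      · exact (hsz x h).not_gt hx.1
    have hsign := isPreconnected_Ioo.forall_pos_or_forall_neg
      ((hc.mono (Ioo_subset_Ioo_left hz.1.le)).mul q.continuous.continuousOn)
      fun x hx => mul_ne_zero (hg x ⟨hz.1.trans hx.1, hx.2⟩ (hright x hx))
        (hqroot x fun h => hright x hx (Finset.mem_insert_of_mem h))
    rcases hsign with hpos | hneg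
    · refine ⟨q, hqdeg.trans (by omega), fun x hx => hqroot x (by simp_all), ?_⟩
      intro x hx hxT
      rcases lt_trichotomy x z with hxz | rfl | hxz
      · exact hq x ⟨hx.1, hxz⟩ (by simp_all)
      · simp at hxT
      · exact hpos x ⟨hxz, hx.2⟩
    · refine ⟨q * (C z - X), ?_, ?_, ?_⟩
      · have hlin : (C z - X : ℝ[X]).natDegree ≤ 1 :=
          (natDegree_sub_le _ _).trans (by simp)
        exact natDegree_mul_le.trans (by omega)
      · intro x hx
        simp only [eval_mul, eval_sub, eval_C, eval_X]
        exact mul_ne_zero (hqroot x (by simp_all)) (sub_ne_zero.2 (by rintro rfl; simp at hx))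
      · intro x hx hxT
        simp only [eval_mul, eval_sub, eval_C, eval_X, ← mul_assoc]
        rcases lt_trichotomy x z with hxz | rfl | hxz
        · exact mul_pos (hq x ⟨hx.1, hxz⟩ (by simp_all)) (sub_pos.2 hxz)
        · simp at hxT
        · exact mul_pos_of_neg_of_neg (hneg x ⟨hxz, hx.2⟩) (sub_neg.2 hxz)

theorem integral_sign_mul_nonpos_of_forall_integral_abs_le {α : Type*} [MeasurableSpace α]
    {μ : Measure α} {g q : α → ℝ} (hg : Integrable g μ) (hq : Integrable q μ)
    (hg0 : ∀ᵐ x ∂μ, g x ≠ 0)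
    (hmin : ∀ t : ℝ, 0 < t → ∫ x, |g x| ∂μ ≤ ∫ x, |g x - t * q x| ∂μ) :
    ∫ x, Real.sign (g x) * q x ∂μ ≤ 0 := by
  set ψ : ℝ → α → ℝ := fun t x => (|g x - t * q x| - |g x|) / t
  have hint : ∀ t, Integrable (fun x => |g x - t * q x|) μ := fun t =>
    (hg.sub (hq.const_mul t)).abs
  have hψint : ∀ t, Integrable (ψ t) μ := fun t => ((hint t).sub hg.abs).div_const t
  have hψbound : ∀ᶠ t in 𝓝[>] (0 : ℝ), ∀ᵐ x ∂μ, ‖ψ t x‖ ≤ |q x| := by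
    filter_upwards [self_mem_nhdsWithin] with t (ht : 0 < t)
    refine ae_of_all _ fun x => ?_
    rw [Real.norm_eq_abs, abs_div, abs_of_pos ht, div_le_iff₀ ht]
    calc |(|g x - t * q x| - |g x|)| ≤ |t * q x| := by
          simpa using abs_abs_sub_abs_le_abs_sub (g x - t * q x) (g x)
      _ = |q x| * t := by rw [abs_mul, abs_of_pos ht, mul_comm]
  -- away from the zeros of `g`, the difference quotient is eventually constant
  have hψlim : ∀ᵐ x ∂μ, Tendsto (fun t => ψ t x) (𝓝[>] 0) (𝓝 (-(Real.sign (g x) * q x))) := by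
    filter_upwards [hg0] with x hx
    have hsmall : ∀ᶠ t in 𝓝[>] (0 : ℝ), |t * q x| < |g x| := by
      have : Tendsto (fun t : ℝ => |t * q x|) (𝓝 0) (𝓝 0) := by
        simpa using ((continuous_id.mul continuous_const).abs.tendsto (0 : ℝ) :)
      exact (tendsto_nhdsWithin_of_tendsto_nhds this).eventually
        (gt_mem_nhds (abs_pos.2 hx))
    refine tendsto_const_nhds.congr' ?_
    filter_upwards [hsmall, self_mem_nhdsWithin] with t ht (htpos : 0 < t)
    simp only [ψ, Real.abs_sub_eq_of_abs_lt ht]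
    field_simp
    ring
  have hlim := tendsto_integral_filter_of_dominated_convergence _
    (Eventually.of_forall fun t => (hψint t).aestronglyMeasurable) hψbound hq.abs hψlim
  have hψnonneg : ∀ᶠ t in 𝓝[>] (0 : ℝ), 0 ≤ ∫ x, ψ t x ∂μ := by
    filter_upwards [self_mem_nhdsWithin] with t (ht : 0 < t)
    rw [integral_div, integral_sub (hint t) hg.abs]
    exact div_nonneg (sub_nonneg.2 (hmin t ht)) ht.le
  have hlim_nonneg := ge_of_tendsto hlim hψnonneg
  rw [integral_neg] at hlim_nonneg
  linarith

section Interval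

variable {a b : ℝ}

theorem ae_mem_Ioc_imp_of_countable {T : Set ℝ} (hT : T.Countable) {P : ℝ → Prop}
    (h : ∀ x ∈ Ioo a b, x ∉ T → P x) : ∀ᵐ x, x ∈ Ioc a b → P x := by
  filter_upwards [hT.ae_notMem volume, volume.ae_ne b] with x hxT hxb hx
  exact h x ⟨hx.1, hx.2.lt_of_ne hxb⟩ hxT

theorem integral_sign_mul_pos {g q : ℝ → ℝ} {T : Set ℝ} (hab : a < b)
    (hq : ContinuousOn q (Icc a b)) (hT : T.Countable)
    (h : ∀ x ∈ Ioo a b, x ∉ T → 0 < g x * q x) :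
    0 < ∫ x in a..b, Real.sign (g x) * q x := by
  have habs : ∀ᵐ x, x ∈ Ioc a b → Real.sign (g x) * q x = |q x| :=
    ae_mem_Ioc_imp_of_countable hT fun x hx hxT => Real.sign_mul_eq_abs_of_mul_pos (h x hx hxT)
  rw [intervalIntegral.integral_congr_ae' habs (by simp [hab.le])]
  obtain ⟨c, hc, hcT⟩ :=
    (hT.dense_compl ℝ).inter_open_nonempty _ isOpen_Ioo (nonempty_Ioo.2 hab)
  refine intervalIntegral.integral_pos hab hq.abs (fun x _ => abs_nonneg _)
    ⟨c, Ioo_subset_Icc_self hc, abs_pos.2 (right_ne_zero_of_mul (h c hc hcT).ne')⟩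

end Interval

theorem Polynomial.eval_midpoint (p q : ℝ[X]) (x : ℝ) :
    (midpoint ℝ p q).eval x = (p.eval x + q.eval x) / 2 := by
  rw [midpoint_eq_smul_add, eval_smul, eval_add, smul_eq_mul, invOf_eq_inv]
  ring

theorem Polynomial.natDegree_midpoint_le {p q : ℝ[X]} {n : ℕ} (hp : p.natDegree ≤ n)
    (hq : q.natDegree ≤ n) : (midpoint ℝ p q).natDegree ≤ n := by
  rw [midpoint_eq_smul_add]
  exact (natDegree_smul_le _ _).trans ((natDegree_add_le _ _).trans (max_le hp hq))

def IsBestL1Approx (a b : ℝ) (f : ℝ → ℝ) (n : ℕ) (p : ℝ[X]) : Prop :=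
  p.natDegree ≤ n ∧ ∀ q : ℝ[X], q.natDegree ≤ n →
    ∫ x in a..b, |f x - p.eval x| ≤ ∫ x in a..b, |f x - q.eval x|

theorem two_mul_abs_sub_eval_midpoint_le (f : ℝ → ℝ) (p₁ p₂ : ℝ[X]) (x : ℝ) :
    2 * |f x - (midpoint ℝ p₁ p₂).eval x| ≤ |f x - p₁.eval x| + |f x - p₂.eval x| := by
  rw [eval_midpoint, ← abs_two, ← abs_mul, abs_two]
  calc |2 * (f x - (p₁.eval x + p₂.eval x) / 2)|
      = |(f x - p₁.eval x) + (f x - p₂.eval x)| := by ring_nf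
    _ ≤ _ := abs_add_le _ _

section BestApprox

variable {a b : ℝ} {f : ℝ → ℝ} {n : ℕ} {p p₁ p₂ q : ℝ[X]}

theorem continuousOn_abs_sub_eval (hf : ContinuousOn f (Icc a b)) (p : ℝ[X]) :
    ContinuousOn (fun x => |f x - p.eval x|) (Icc a b) :=
  (hf.sub p.continuous.continuousOn).abs

theorem intervalIntegrable_abs_sub_eval (hab : a ≤ b) (hf : ContinuousOn f (Icc a b)) (p : ℝ[X]) :
    IntervalIntegrable (fun x => |f x - p.eval x|) volume a b :=
  (continuousOn_abs_sub_eval hf p).intervalIntegrable_of_Icc hab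

theorem isBestL1Approx_midpoint (hab : a ≤ b) (hf : ContinuousOn f (Icc a b))
    (h₁ : IsBestL1Approx a b f n p₁) (h₂ : IsBestL1Approx a b f n p₂) :
    IsBestL1Approx a b f n (midpoint ℝ p₁ p₂) := by
  refine ⟨natDegree_midpoint_le h₁.1 h₂.1, fun q hq => ?_⟩
  have hi := intervalIntegrable_abs_sub_eval hab hf
  calc ∫ x in a..b, |f x - (midpoint ℝ p₁ p₂).eval x|
      ≤ ∫ x in a..b, (|f x - p₁.eval x| + |f x - p₂.eval x|) / 2 :=
        intervalIntegral.integral_mono_on hab (hi _) (((hi p₁).add (hi p₂)).div_const 2)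
          fun x _ => by linarith [two_mul_abs_sub_eval_midpoint_le f p₁ p₂ x]
    _ = ((∫ x in a..b, |f x - p₁.eval x|) + ∫ x in a..b, |f x - p₂.eval x|) / 2 := by
        rw [intervalIntegral.integral_div, intervalIntegral.integral_add (hi p₁) (hi p₂)]
    _ ≤ ∫ x in a..b, |f x - q.eval x| := by linarith [h₁.2 q hq, h₂.2 q hq]

theorem IsBestL1Approx.eval_eq_of_eval_midpoint_eq (hab : a < b) (hf : ContinuousOn f (Icc a b))
    (h₁ : IsBestL1Approx a b f n p₁) (h₂ : IsBestL1Approx a b f n p₂) {x : ℝ} (hx : x ∈ Icc a b)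
    (hm : (midpoint ℝ p₁ p₂).eval x = f x) : p₁.eval x = p₂.eval x := by
  set m := midpoint ℝ p₁ p₂
  set φ : ℝ → ℝ := fun x => |f x - p₁.eval x| + |f x - p₂.eval x| - 2 * |f x - m.eval x|
  have hi := intervalIntegrable_abs_sub_eval hab.le hf
  have hφ_int : ∫ x in a..b, φ x = (∫ x in a..b, |f x - p₁.eval x|)
      + (∫ x in a..b, |f x - p₂.eval x|) - 2 * ∫ x in a..b, |f x - m.eval x| := by
    rw [intervalIntegral.integral_sub ((hi p₁).add (hi p₂)) ((hi m).const_mul 2),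
      intervalIntegral.integral_add (hi p₁) (hi p₂), intervalIntegral.integral_const_mul]
  have hm_deg := natDegree_midpoint_le h₁.1 h₂.1
  have hφ_x : φ x ≤ 0 := by
    by_contra! hpos
    have hφc : ContinuousOn φ (Icc a b) :=
      ((continuousOn_abs_sub_eval hf p₁).add (continuousOn_abs_sub_eval hf p₂)).sub
        (continuousOn_const.mul (continuousOn_abs_sub_eval hf m))
    have := intervalIntegral.integral_pos hab hφc
      (fun y _ => sub_nonneg.2 (two_mul_abs_sub_eval_midpoint_le f p₁ p₂ y)) ⟨x, hx, hpos⟩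
    linarith [h₁.2 m hm_deg, h₂.2 m hm_deg]
  simp only [φ, hm, sub_self, abs_zero, mul_zero, sub_zero] at hφ_x
  obtain ⟨e₁, e₂⟩ : |f x - p₁.eval x| = 0 ∧ |f x - p₂.eval x| = 0 := by
    constructor <;> linarith [abs_nonneg (f x - p₁.eval x), abs_nonneg (f x - p₂.eval x)]
  rw [abs_eq_zero, sub_eq_zero] at e₁ e₂
  rw [← e₁, ← e₂]

theorem IsBestL1Approx.integral_sign_mul_nonpos (hab : a ≤ b) (hf : ContinuousOn f (Icc a b))
    (hp : IsBestL1Approx a b f n p) (hne : ∀ᵐ x, x ∈ Ioc a b → f x ≠ p.eval x)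
    (hq : q.natDegree ≤ n) :
    ∫ x in a..b, Real.sign (f x - p.eval x) * q.eval x ≤ 0 := by
  have hint {g : ℝ → ℝ} (hg : ContinuousOn g (Icc a b)) :
      Integrable g (volume.restrict (Ioc a b)) :=
    hg.integrableOn_Icc.mono_set Ioc_subset_Icc_self
  rw [intervalIntegral.integral_of_le hab]
  refine integral_sign_mul_nonpos_of_forall_integral_abs_le
    (hint (hf.sub p.continuous.continuousOn)) (hint q.continuous.continuousOn)
    ((ae_restrict_iff' measurableSet_Ioc).2 (hne.mono fun x hx hxI => sub_ne_zero.2 (hx hxI)))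
    fun t _ => ?_
  have hbest := hp.2 (p + C t * q)
    ((natDegree_add_le _ _).trans (max_le hp.1 ((natDegree_C_mul_le _ _).trans hq)))
  simpa only [intervalIntegral.integral_of_le hab, eval_add, eval_mul, eval_C,
    sub_add_eq_sub_sub] using hbest

end BestApprox

theorem stmt_3 (f : ℝ → ℝ) (n : ℕ) (hf : ContinuousOn f (Set.Icc 0 1))
    (p₁ p₂ : Polynomial ℝ) (hp₁ : p₁.natDegree ≤ n) (hp₂ : p₂.natDegree ≤ n)
    (hbest₁ : ∀ q : Polynomial ℝ, q.natDegree ≤ n →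
      (∫ x in (0:ℝ)..1, |f x - p₁.eval x|) ≤ ∫ x in (0:ℝ)..1, |f x - q.eval x|)
    (hbest₂ : ∀ q : Polynomial ℝ, q.natDegree ≤ n →
      (∫ x in (0:ℝ)..1, |f x - p₂.eval x|) ≤ ∫ x in (0:ℝ)..1, |f x - q.eval x|) :
    p₁ = p₂ := by
  have h₁ : IsBestL1Approx 0 1 f n p₁ := ⟨hp₁, hbest₁⟩
  have h₂ : IsBestL1Approx 0 1 f n p₂ := ⟨hp₂, hbest₂⟩
  by_contra hne
  set m := midpoint ℝ p₁ p₂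
  set T := (p₁ - p₂).roots.toFinset
  have hT : ∀ x ∈ Ioo (0 : ℝ) 1, x ∉ T → f x - m.eval x ≠ 0 := fun x hx hxT hfx => hxT <| by
    rw [Multiset.mem_toFinset, mem_roots (sub_ne_zero.2 hne), IsRoot.def, eval_sub, sub_eq_zero]
    exact h₁.eval_eq_of_eval_midpoint_eq one_pos hf h₂ (Ioo_subset_Icc_self hx)
      (sub_eq_zero.1 hfx).symm
  have hT_card : T.card ≤ n := (Multiset.toFinset_card_le _).trans
    ((card_roots' _).trans ((natDegree_sub_le _ _).trans (max_le hp₁ hp₂)))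
  obtain ⟨q, hq_deg, -, hq⟩ := exists_polynomial_same_sign (g := fun x => f x - m.eval x) T
    ((hf.sub m.continuous.continuousOn).mono Ioo_subset_Icc_self) hT
  have hle := (isBestL1Approx_midpoint zero_le_one hf h₁ h₂).integral_sign_mul_nonpos
    zero_le_one hf (ae_mem_Ioc_imp_of_countable T.countable_toSet
      fun x hx hxT => sub_ne_zero.1 (hT x hx hxT)) (hq_deg.trans hT_card)
  have hpos := integral_sign_mul_pos one_pos q.continuous.continuousOn T.countable_toSet hq
  exact hle.not_gt hpos
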